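/- arXiv:0809.3767 — 5 statements merged into one kernel-verified Lean document; each statement's English description precedes it below -/
import Mathlib

section
/- Assume R₀ > 1 and let n̂ be the stationary age profile. Then: (i) N̂ := ∫₀^∞ n̂(a) da = λ₁ / η; (ii) for every a ≥ 0, n̂ is differentiable at a with n̂′(a) = −(d(a) + η N̂) n̂(a); and (iii) n̂(0) = ∫₀^∞ b(a) n̂(a) da. In particular, n̂ is a nontrivial stationary solution of the Gurtin–McCamy equation with logistic death rate d(a) + η N. -/
open MeasureTheory Set

/-- Probability of survival from age `a₁` to age `a₂` in the absence of competition. -/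
noncomputable def survival (d : ℝ → ℝ) (a₁ a₂ : ℝ) : ℝ :=
  Real.exp (-(∫ α in a₁..a₂, d α))

/-- The Euler–Lotka characteristic function `φ(λ) = ∫₀^∞ e^{-λ a} b(a) Π(0,a) da`. -/
noncomputable def eulerLotka (b d : ℝ → ℝ) (lam : ℝ) : ℝ :=
  ∫ a in Ioi (0 : ℝ), Real.exp (-lam * a) * b a * survival d 0 a

/-- The stationary age profile
`n̂(a) = λ₁ e^{-λ₁ a} Π(0,a) / (η ∫₀^∞ e^{-λ₁ α} Π(0,α) dα)`. -/
noncomputable def statProfile (d : ℝ → ℝ) (η lam : ℝ) (a : ℝ) : ℝ :=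
  lam * Real.exp (-lam * a) * survival d 0 a /
    (η * ∫ α in Ioi (0 : ℝ), Real.exp (-lam * α) * survival d 0 α)

/-!
`n̂ = c · e^{-λa} Π(0,a)` with `c = λ / (η I)` and `I = ∫₀^∞ e^{-λa} Π(0,a) da`, which is finite
and positive because `d ≥ 0`. Hence `N̂ = c I = λ / η`, i.e. `η N̂ = λ`, and the product rule gives
`n̂′ = -(λ + d) n̂ = -(d + η N̂) n̂`; finally `∫ b n̂ = c φ(λ) = c = n̂(0)` since `φ(λ) = 1`.
-/
section Survival

variable {d : ℝ → ℝ}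

theorem survival_self (d : ℝ → ℝ) (a : ℝ) : survival d a a = 1 := by
  simp [survival]

theorem survival_pos (d : ℝ → ℝ) (a₁ a₂ : ℝ) : 0 < survival d a₁ a₂ :=
  Real.exp_pos _

theorem survival_le_one {a₁ a₂ : ℝ} (hd : ∀ x ∈ Icc a₁ a₂, 0 ≤ d x) (h : a₁ ≤ a₂) :
    survival d a₁ a₂ ≤ 1 := by
  rw [survival, Real.exp_le_one_iff, neg_nonpos]
  exact intervalIntegral.integral_nonneg h hd

theorem hasDerivAt_survival (hd : Continuous d) (a₁ a : ℝ) :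
    HasDerivAt (survival d a₁) (-d a * survival d a₁ a) a := by
  have hF : HasDerivAt (fun x => ∫ α in a₁..x, d α) (d a) a :=
    intervalIntegral.integral_hasDerivAt_right (hd.intervalIntegrable _ _)
      (hd.stronglyMeasurableAtFilter _ _) hd.continuousAt
  refine hF.neg.exp.congr_deriv ?_
  rw [Pi.neg_apply, survival]
  ring

theorem continuous_survival (hd : Continuous d) (a₁ : ℝ) : Continuous (survival d a₁) :=
  continuous_iff_continuousAt.2 fun a => (hasDerivAt_survival hd a₁ a).continuousAt

theorem integrableOn_exp_mul_survival (hd : Continuous d) (hd0 : ∀ a, 0 ≤ a → 0 ≤ d a)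
    {lam : ℝ} (hlam : 0 < lam) :
    IntegrableOn (fun a => Real.exp (-lam * a) * survival d 0 a) (Ioi 0) := by
  have hcont : Continuous fun a => Real.exp (-lam * a) * survival d 0 a :=
    (by fun_prop : Continuous fun a => Real.exp (-lam * a)).mul (continuous_survival hd 0)
  refine (exp_neg_integrableOn_Ioi 0 hlam).mono' hcont.aestronglyMeasurable.restrict ?_
  filter_upwards [ae_restrict_mem measurableSet_Ioi] with a ha
  rw [Real.norm_of_nonneg (mul_nonneg (Real.exp_pos _).le (survival_pos d 0 a).le)]
  exact mul_le_of_le_one_right (Real.exp_pos _).le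
    (survival_le_one (fun x hx => hd0 x hx.1) (le_of_lt ha))

theorem integral_exp_mul_survival_pos (hd : Continuous d) (hd0 : ∀ a, 0 ≤ a → 0 ≤ d a)
    {lam : ℝ} (hlam : 0 < lam) :
    0 < ∫ a in Ioi 0, Real.exp (-lam * a) * survival d 0 a := by
  have hpos : ∀ a, 0 < Real.exp (-lam * a) * survival d 0 a :=
    fun a => mul_pos (Real.exp_pos _) (survival_pos d 0 a)
  rw [setIntegral_pos_iff_support_of_nonneg_ae
    (Filter.Eventually.of_forall fun a => (hpos a).le)
    (integrableOn_exp_mul_survival hd hd0 hlam),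
    Function.support_eq_univ fun a => (hpos a).ne', univ_inter, Real.volume_Ioi]
  exact ENNReal.zero_lt_top

end Survival

section StatProfile

variable {d : ℝ → ℝ} {η lam : ℝ}

theorem statProfile_eq_mul (d : ℝ → ℝ) (η lam a : ℝ) :
    statProfile d η lam a =
      lam / (η * ∫ α in Ioi 0, Real.exp (-lam * α) * survival d 0 α) *
        (Real.exp (-lam * a) * survival d 0 a) := by
  rw [statProfile]
  ring

theorem integral_statProfile (hη : η ≠ 0)
    (hI : ∫ α in Ioi 0, Real.exp (-lam * α) * survival d 0 α ≠ 0) :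
    ∫ a in Ioi 0, statProfile d η lam a = lam / η := by
  rw [funext (statProfile_eq_mul d η lam), integral_const_mul]
  generalize (∫ α in Ioi 0, Real.exp (-lam * α) * survival d 0 α) = I at hI ⊢
  field_simp

theorem hasDerivAt_statProfile (hd : Continuous d) (a : ℝ) :
    HasDerivAt (statProfile d η lam) (-(d a + lam) * statProfile d η lam a) a := by
  have hexp : HasDerivAt (fun x => Real.exp (-lam * x)) (-lam * Real.exp (-lam * a)) a := by
    simpa [mul_comm] using ((hasDerivAt_id a).const_mul (-lam)).exp
  refine (((hexp.const_mul lam).mul (hasDerivAt_survival hd 0 a)).div_const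
    (η * ∫ α in Ioi 0, Real.exp (-lam * α) * survival d 0 α)).congr_deriv ?_
  rw [statProfile]
  ring

theorem integral_mul_statProfile (b : ℝ → ℝ) :
    ∫ a in Ioi 0, b a * statProfile d η lam a = eulerLotka b d lam * statProfile d η lam 0 := by
  have h : ∀ a, b a * statProfile d η lam a =
      statProfile d η lam 0 * (Real.exp (-lam * a) * b a * survival d 0 a) := by
    intro a
    rw [statProfile_eq_mul d η lam a, statProfile_eq_mul d η lam 0, survival_self, mul_zero,
      Real.exp_zero]
    ring
  simp_rw [h]
  rw [integral_const_mul, eulerLotka, mul_comm]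

end StatProfile

theorem statProfile_is_stationary_solution_general
    (b d : ℝ → ℝ) (dlow η lam : ℝ)
    (hdcont : Continuous d) (hdlow : ∀ a, 0 ≤ a → dlow ≤ d a) (hdlowpos : 0 < dlow)
    (hη : 0 < η)
    (hlam : 0 < lam) (hroot : eulerLotka b d lam = 1) :
    (∫ a in Ioi (0 : ℝ), statProfile d η lam a) = lam / η ∧
    (∀ a, 0 ≤ a →
      HasDerivAt (statProfile d η lam)
        (-(d a + η * ∫ α in Ioi (0 : ℝ), statProfile d η lam α) * statProfile d η lam a) a) ∧
    statProfile d η lam 0 = ∫ a in Ioi (0 : ℝ), b a * statProfile d η lam a := by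
  have hd0 : ∀ a, 0 ≤ a → 0 ≤ d a := fun a ha => hdlowpos.le.trans (hdlow a ha)
  have hmass : ∫ a in Ioi 0, statProfile d η lam a = lam / η :=
    integral_statProfile hη.ne' (integral_exp_mul_survival_pos hdcont hd0 hlam).ne'
  refine ⟨hmass, fun a _ => ?_, ?_⟩
  · rw [hmass, mul_div_cancel₀ lam hη.ne']
    exact hasDerivAt_statProfile hdcont a
  · rw [integral_mul_statProfile, hroot, one_mul]

/-- If `R₀ > 1` and `λ₁ > 0` is the root of the Euler–Lotka equation, then the
stationary profile `n̂` has total mass `N̂ = λ₁/η`, satisfies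
`n̂′(a) = -(d(a) + η N̂) n̂(a)` for all `a ≥ 0`, and the birth boundary condition
`n̂(0) = ∫₀^∞ b(a) n̂(a) da`: it is a nontrivial stationary solution of the
Gurtin–McCamy equation with logistic death rate. -/
theorem statProfile_is_stationary_solution
    (b d : ℝ → ℝ) (bbar dlow η lam : ℝ)
    (hbcont : Continuous b) (hb0 : ∀ a, 0 ≤ b a) (hbbar : ∀ a, b a ≤ bbar)
    (hbbarpos : 0 < bbar)
    (hdcont : Continuous d) (hdlow : ∀ a, 0 ≤ a → dlow ≤ d a) (hdlowpos : 0 < dlow)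
    (hη : 0 < η)
    (hR0 : 1 < ∫ a in Ioi (0 : ℝ), b a * survival d 0 a)
    (hlam : 0 < lam) (hroot : eulerLotka b d lam = 1) :
    (∫ a in Ioi (0 : ℝ), statProfile d η lam a) = lam / η ∧
    (∀ a, 0 ≤ a →
      HasDerivAt (statProfile d η lam)
        (-(d a + η * ∫ α in Ioi (0 : ℝ), statProfile d η lam α) * statProfile d η lam a) a) ∧
    statProfile d η lam 0 = ∫ a in Ioi (0 : ℝ), b a * statProfile d η lam a :=
  statProfile_is_stationary_solution_general b d dlow η lam hdcont hdlow hdlowpos hη hlam hroot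
end

section
/- Assume R₀ > 1. If m : [0, ∞) → [0, ∞) is differentiable, integrable, not identically zero, and satisfies m′(a) = −(d(a) + η ∫₀^∞ m(α) dα) · m(a) for all a ≥ 0 together with the boundary condition m(0) = ∫₀^∞ b(a) m(a) da, then m coincides with the stationary age profile n̂. Hence the nontrivial stationary solution of the logistic Gurtin–McCamy equation is unique. -/
open MeasureTheory Set

/-!
With `c = η ∫₀^∞ m`, the equation for `m` is the linear equation `m' = -(d + c) m`, so
`m(a) = m(0) e^{-c a} Π(0,a)` and `m(0) ≠ 0`. The boundary condition then reads
`m(0) = m(0) φ(c)`, i.e. `φ(c) = 1`. Since `b ≥ 0`, `φ` is strictly decreasing wherever it is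
nonzero, so `c = λ₁`; finally `λ₁ = c = η m(0) ∫₀^∞ e^{-λ₁ α} Π(0,α) dα` determines `m(0)`.
-/

section Survival

variable {d : ℝ → ℝ}

theorem survival_add_const {a₁ a₂ : ℝ} (hd : IntervalIntegrable d volume a₁ a₂) (c : ℝ) :
    survival (fun t => d t + c) a₁ a₂ = Real.exp (-c * (a₂ - a₁)) * survival d a₁ a₂ := by
  rw [survival, survival, ← Real.exp_add,
    intervalIntegral.integral_add hd intervalIntegrable_const, intervalIntegral.integral_const,
    smul_eq_mul]
  congr 1
  ring

theorem eq_mul_survival_of_hasDerivAt {f : ℝ → ℝ} (hd : Continuous d)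
    (hf : ∀ x, 0 ≤ x → HasDerivAt f (-d x * f x) x) {a : ℝ} (ha : 0 ≤ a) :
    f a = f 0 * survival d 0 a := by
  set E : ℝ → ℝ := fun u => Real.exp (∫ t in (0 : ℝ)..u, d t)
  have hE : ∀ x, HasDerivAt E (E x * d x) x := fun x =>
    (intervalIntegral.integral_hasDerivAt_right (hd.intervalIntegrable 0 x)
      hd.stronglyMeasurable.stronglyMeasurableAtFilter hd.continuousAt).exp
  have hfE : ∀ x, 0 ≤ x → HasDerivAt (fun u => f u * E u) 0 x := fun x hx =>
    ((hf x hx).mul (hE x)).congr_deriv (by ring)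
  have hconst : f a * E a = f 0 * E 0 :=
    constant_of_has_deriv_right_zero (fun x hx => (hfE x hx.1).continuousAt.continuousWithinAt)
      (fun x hx => (hfE x hx.1).hasDerivWithinAt) a (right_mem_Icc.mpr ha)
  have hE0 : E 0 = 1 := by simp [E]
  rw [hE0, mul_one] at hconst
  rw [survival, Real.exp_neg, ← hconst, mul_inv_cancel_right₀ (Real.exp_ne_zero _)]

end Survival

theorem eulerLotka_strictAntiOn {b : ℝ → ℝ} (d : ℝ → ℝ) (hb : ∀ a, 0 ≤ b a) :
    StrictAntiOn (eulerLotka b d) {p | eulerLotka b d p ≠ 0} := by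
  intro p (hp : eulerLotka b d p ≠ 0) q (hq : eulerLotka b d q ≠ 0) hpq
  set g : ℝ → ℝ := fun a => b a * survival d 0 a
  have hg : ∀ a, 0 ≤ g a := fun a => mul_nonneg (hb a) (Real.exp_pos _).le
  have hφ : ∀ r, eulerLotka b d r = ∫ a in Ioi (0 : ℝ), Real.exp (-r * a) * g a := fun r => by
    simp only [eulerLotka, g, mul_assoc]
  simp only [hφ] at hp hq ⊢
  have ip := Integrable.of_integral_ne_zero hp
  have iq := Integrable.of_integral_ne_zero hq
  have hexp : ∀ a ∈ Ioi (0 : ℝ), Real.exp (-q * a) < Real.exp (-p * a) := fun a (ha : 0 < a) =>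
    Real.exp_lt_exp.mpr (by nlinarith)
  have hle : ∀ a ∈ Ioi (0 : ℝ), Real.exp (-q * a) * g a ≤ Real.exp (-p * a) * g a :=
    fun a ha => mul_le_mul_of_nonneg_right (hexp a ha).le (hg a)
  refine (setIntegral_mono_on iq ip measurableSet_Ioi hle).lt_of_ne fun heq => hp ?_
  -- equal integrals force `g = 0` a.e. on `(0, ∞)`, since the weights differ strictly there
  have hdiff : (fun a => Real.exp (-p * a) * g a - Real.exp (-q * a) * g a)
      =ᵐ[volume.restrict (Ioi 0)] 0 := by
    refine (setIntegral_eq_zero_iff_of_nonneg_ae ?_ (ip.sub iq)).mp ?_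
    · filter_upwards [ae_restrict_mem measurableSet_Ioi] with a ha
      exact sub_nonneg.mpr (hle a ha)
    · simp only [Pi.sub_apply]
      rw [integral_sub ip iq, heq, sub_self]
  refine integral_eq_zero_of_ae ?_
  filter_upwards [hdiff, ae_restrict_mem measurableSet_Ioi] with a hzero ha
  have hga : g a = 0 := by
    have : (Real.exp (-p * a) - Real.exp (-q * a)) * g a = 0 := by
      rw [sub_mul]; exact hzero
    exact (mul_eq_zero.mp this).resolve_left (sub_ne_zero.mpr (hexp a ha).ne')
  simp [hga]

theorem stationary_solution_unique_general
    (b d : ℝ → ℝ) (η lam : ℝ)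
    (hb0 : ∀ a, 0 ≤ b a)
    (hdcont : Continuous d)
    (hlam : 0 < lam) (hroot : eulerLotka b d lam = 1)
    (m : ℝ → ℝ)
    (hmderiv : ∀ a, 0 ≤ a →
      HasDerivAt m (-(d a + η * ∫ α in Ioi (0 : ℝ), m α) * m a) a)
    (hmne : ∃ a, 0 ≤ a ∧ m a ≠ 0)
    (hmbc : m 0 = ∫ a in Ioi (0 : ℝ), b a * m a) :
    ∀ a, 0 ≤ a → m a = statProfile d η lam a := by
  set c := η * ∫ α in Ioi (0 : ℝ), m α with hc
  have hsol : ∀ a, 0 ≤ a → m a = m 0 * (Real.exp (-c * a) * survival d 0 a) := fun a ha => by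
    have := eq_mul_survival_of_hasDerivAt (d := fun t => d t + c)
      (hdcont.add continuous_const) hmderiv ha
    rwa [survival_add_const (hdcont.intervalIntegrable 0 a), sub_zero] at this
  have hmIoi : ∀ f : ℝ → ℝ, ∫ a in Ioi (0 : ℝ), f a * m a
      = m 0 * ∫ a in Ioi (0 : ℝ), Real.exp (-c * a) * f a * survival d 0 a := fun f => by
    rw [← integral_const_mul]
    refine setIntegral_congr_fun measurableSet_Ioi fun a ha => ?_
    rw [hsol a (le_of_lt ha)]
    ring
  obtain ⟨a₀, ha₀, hma₀⟩ := hmne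
  have hm0 : m 0 ≠ 0 := fun h => hma₀ (by rw [hsol a₀ ha₀, h, zero_mul])
  have hφc : eulerLotka b d c = 1 := (mul_eq_left₀ hm0).mp (hmbc.trans (hmIoi b)).symm
  have hclam : c = lam :=
    (eulerLotka_strictAntiOn d hb0).injOn (by simp [hφc]) (by simp [hroot]) (hφc.trans hroot.symm)
  set I := ∫ α in Ioi (0 : ℝ), Real.exp (-lam * α) * survival d 0 α
  have hηI : η * I = lam / m 0 := by
    have hmass := hmIoi fun _ => 1
    simp only [one_mul, mul_one, hclam] at hmass
    rw [eq_div_iff hm0, ← hclam, hc, hmass]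
    ring
  intro a ha
  rw [hsol a ha, hclam, statProfile, hηI]
  field_simp

/-- Assume `R₀ > 1`. Any nonnegative, differentiable, integrable, not identically zero
function `m` on `[0,∞)` satisfying the stationary logistic Gurtin–McCamy equation
`m′(a) = -(d(a) + η ∫₀^∞ m) m(a)` with boundary condition `m(0) = ∫₀^∞ b(a) m(a) da`
coincides with the stationary profile `n̂`: the nontrivial stationary solution is unique. -/
theorem stationary_solution_unique
    (b d : ℝ → ℝ) (bbar dlow η lam : ℝ)
    (hbcont : Continuous b) (hb0 : ∀ a, 0 ≤ b a) (hbbar : ∀ a, b a ≤ bbar)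
    (hbbarpos : 0 < bbar)
    (hdcont : Continuous d) (hdlow : ∀ a, 0 ≤ a → dlow ≤ d a) (hdlowpos : 0 < dlow)
    (hη : 0 < η)
    (hR0 : 1 < ∫ a in Ioi (0 : ℝ), b a * survival d 0 a)
    (hlam : 0 < lam) (hroot : eulerLotka b d lam = 1)
    (m : ℝ → ℝ)
    (hm0 : ∀ a, 0 ≤ a → 0 ≤ m a)
    (hmint : IntegrableOn m (Ioi (0 : ℝ)))
    (hmderiv : ∀ a, 0 ≤ a →
      HasDerivAt m (-(d a + η * ∫ α in Ioi (0 : ℝ), m α) * m a) a)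
    (hmne : ∃ a, 0 ≤ a ∧ m a ≠ 0)
    (hmbc : m 0 = ∫ a in Ioi (0 : ℝ), b a * m a) :
    ∀ a, 0 ≤ a → m a = statProfile d η lam a :=
  stationary_solution_unique_general b d η lam hb0 hdcont hlam hroot m hmderiv hmne hmbc
end

section
/- For every t ≥ 0 the series B(t) = ∑_{n=0}^∞ c_n(t) converges, satisfies 0 ≤ B(t) ≤ b̄ e^{b̄ t}, and B solves the renewal equation B(t) = B₀(t) + ∫₀^t g(t − s) B(s) ds for all t ≥ 0. -/
open MeasureTheory Set
open scoped Nat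

/-! By induction, `0 ≤ cₙ(t) ≤ b̄ (b̄ t)ⁿ / n!` for `t ≥ 0`: convolving with `0 ≤ g ≤ b̄` integrates
the bound once more. So the series is dominated by `b̄` times the exponential series at `b̄ t`, and
dominated convergence moves the sum inside `c_{n+1}(t) = ∫₀ᵗ g(t - s) cₙ(s) ds`, which is the
renewal equation. The iterates are measurable on all of `ℝ` because a parametric integral of a
jointly measurable function is measurable. -/

theorem StronglyMeasurable.intervalIntegral_upper_limit {E : Type*} [NormedAddCommGroup E]
    [NormedSpace ℝ E] {f : ℝ → ℝ → E} (hf : StronglyMeasurable (Function.uncurry f)) (a : ℝ) :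
    StronglyMeasurable fun t => ∫ s in a..t, f t s := by
  have hsetIntegral : ∀ S : ℝ → Set ℝ, MeasurableSet {p : ℝ × ℝ | p.2 ∈ S p.1} →
      StronglyMeasurable fun t => ∫ s in S t, f t s := by
    intro S hS
    convert (hf.indicator hS).integral_prod_right' (ν := volume) using 2 with t
    exact (integral_indicator (s := S t) (measurable_prodMk_left hS)).symm
  have hIoc : ∀ u v : ℝ → ℝ, Measurable u → Measurable v →
      MeasurableSet {p : ℝ × ℝ | p.2 ∈ Ioc (u p.1) (v p.1)} := fun u v hu hv =>
    (measurableSet_lt (hu.comp measurable_fst) measurable_snd).inter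
      (measurableSet_le measurable_snd (hv.comp measurable_fst))
  exact (hsetIntegral _ (hIoc _ _ measurable_const measurable_id)).sub
    (hsetIntegral _ (hIoc _ _ measurable_id measurable_const))

theorem integral_mul_pow_div_factorial (b t : ℝ) (n : ℕ) :
    ∫ s in (0 : ℝ)..t, b * ((b * s) ^ n / n !) = (b * t) ^ (n + 1) / (n + 1)! := by
  have hfun : (fun s : ℝ => b * ((b * s) ^ n / n !)) = fun s => b ^ (n + 1) / n ! * s ^ n := by
    funext s; ring
  rw [hfun, intervalIntegral.integral_const_mul, integral_pow, Nat.factorial_succ]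
  push_cast
  field_simp
  ring

section Convolution

variable {t b : ℝ} {g f h : ℝ → ℝ}

theorem integral_conv_nonneg_and_le (ht : 0 ≤ t) (hgm : Measurable g) (hfm : Measurable f)
    (hh : IntervalIntegrable h volume 0 t) (hg : ∀ s ∈ Icc 0 t, 0 ≤ g s ∧ g s ≤ b)
    (hf : ∀ s ∈ Icc 0 t, 0 ≤ f s ∧ f s ≤ h s) :
    0 ≤ ∫ s in (0 : ℝ)..t, g (t - s) * f s ∧
      ∫ s in (0 : ℝ)..t, g (t - s) * f s ≤ b * ∫ s in (0 : ℝ)..t, h s := by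
  have hpt : ∀ s ∈ Icc 0 t, 0 ≤ g (t - s) * f s ∧ g (t - s) * f s ≤ b * h s := by
    intro s hs
    obtain ⟨hg0, hgb⟩ := hg (t - s) ⟨sub_nonneg.2 hs.2, sub_le_self t hs.1⟩
    obtain ⟨hf0, hfh⟩ := hf s hs
    exact ⟨mul_nonneg hg0 hf0, (mul_le_mul_of_nonneg_left hfh hg0).trans
      (mul_le_mul_of_nonneg_right hgb (hf0.trans hfh))⟩
  have hint : IntervalIntegrable (fun s => g (t - s) * f s) volume 0 t := by
    refine (hh.const_mul b).mono_fun'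
      ((hgm.comp (measurable_const.sub measurable_id)).mul hfm).aestronglyMeasurable ?_
    rw [uIoc_of_le ht]
    refine (ae_restrict_mem measurableSet_Ioc).mono fun s hs => ?_
    obtain ⟨h0, hle⟩ := hpt s (Ioc_subset_Icc_self hs)
    show ‖_‖ ≤ _
    rwa [Real.norm_of_nonneg h0]
  refine ⟨intervalIntegral.integral_nonneg ht fun s hs => (hpt s hs).1, ?_⟩
  rw [← intervalIntegral.integral_const_mul]
  exact intervalIntegral.integral_mono_on ht hint (hh.const_mul b) fun s hs => (hpt s hs).2

theorem hasSum_integral_conv_of_dominated {K : ℝ} {F : ℕ → ℝ → ℝ} {M : ℕ → ℝ} {f : ℝ → ℝ}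
    (ht : 0 ≤ t) (hgm : Measurable g) (hg : ∀ s ∈ Icc 0 t, |g s| ≤ K)
    (hFm : ∀ n, Measurable (F n)) (hF : ∀ n, ∀ s ∈ Icc 0 t, |F n s| ≤ M n) (hM : Summable M)
    (hFf : ∀ s ∈ Icc 0 t, HasSum (fun n => F n s) (f s)) :
    HasSum (fun n => ∫ s in (0 : ℝ)..t, g (t - s) * F n s)
      (∫ s in (0 : ℝ)..t, g (t - s) * f s) := by
  have hmem : ∀ s ∈ uIoc 0 t, s ∈ Icc 0 t ∧ t - s ∈ Icc 0 t := by
    intro s hs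
    rw [uIoc_of_le ht] at hs
    exact ⟨Ioc_subset_Icc_self hs, sub_nonneg.2 hs.2, sub_le_self t hs.1.le⟩
  refine intervalIntegral.hasSum_integral_of_dominated_convergence (fun n _ => K * M n)
    (fun n => ((hgm.comp (measurable_const.sub measurable_id)).mul (hFm n)).aestronglyMeasurable)
    (fun n => .of_forall fun s hs => ?_) (.of_forall fun _ _ => hM.mul_left K)
    intervalIntegrable_const (.of_forall fun s hs => ((hFf s (hmem s hs).1).mul_left _))
  rw [norm_mul, Real.norm_eq_abs, Real.norm_eq_abs]
  exact mul_le_mul (hg _ (hmem s hs).2) (hF n s (hmem s hs).1) (abs_nonneg _)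
    ((abs_nonneg _).trans (hg _ (hmem s hs).2))

end Convolution

section RenewalIterates

variable {b : ℝ} {B₀ g : ℝ → ℝ} {c : ℕ → ℝ → ℝ}

theorem measurable_renewal_iterate (hB₀m : Measurable B₀) (hgm : Measurable g)
    (hc0 : ∀ t, c 0 t = B₀ t)
    (hcrec : ∀ n t, c (n + 1) t = ∫ s in (0 : ℝ)..t, g (t - s) * c n s) (n : ℕ) :
    Measurable (c n) := by
  induction n with
  | zero => exact funext hc0 ▸ hB₀m
  | succ n ih =>
    rw [funext (hcrec n)]
    exact (StronglyMeasurable.intervalIntegral_upper_limit (f := fun t s => g (t - s) * c n s)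
      ((hgm.comp (measurable_fst.sub measurable_snd)).mul
        (ih.comp measurable_snd)).stronglyMeasurable 0).measurable

theorem renewal_iterate_bounds (hB₀m : Measurable B₀) (hgm : Measurable g)
    (hB₀ : ∀ t, 0 ≤ t → 0 ≤ B₀ t ∧ B₀ t ≤ b) (hg : ∀ t, 0 ≤ t → 0 ≤ g t ∧ g t ≤ b)
    (hc0 : ∀ t, c 0 t = B₀ t)
    (hcrec : ∀ n t, c (n + 1) t = ∫ s in (0 : ℝ)..t, g (t - s) * c n s) (n : ℕ) {t : ℝ}
    (ht : 0 ≤ t) : 0 ≤ c n t ∧ c n t ≤ b * ((b * t) ^ n / n !) := by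
  induction n generalizing t with
  | zero => simpa [hc0] using hB₀ t ht
  | succ n ih =>
    have hconv := integral_conv_nonneg_and_le ht hgm
      (measurable_renewal_iterate hB₀m hgm hc0 hcrec n)
      (Continuous.intervalIntegrable (by fun_prop) _ _)
      (fun s hs => hg s hs.1) (fun s hs => ih hs.1)
    rwa [integral_mul_pow_div_factorial, ← hcrec] at hconv

end RenewalIterates

theorem renewal_series_solves_renewal_equation_general
    (bbar : ℝ)
    (B₀ g : ℝ → ℝ) (hB₀meas : Measurable B₀) (hgmeas : Measurable g)
    (hB₀ : ∀ t, 0 ≤ t → 0 ≤ B₀ t ∧ B₀ t ≤ bbar)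
    (hg : ∀ t, 0 ≤ t → 0 ≤ g t ∧ g t ≤ bbar)
    (c : ℕ → ℝ → ℝ)
    (hc0 : ∀ t, c 0 t = B₀ t)
    (hcrec : ∀ n t, c (n + 1) t = ∫ s in (0 : ℝ)..t, g (t - s) * c n s)
    (B : ℝ → ℝ) (hB : ∀ t, B t = ∑' n : ℕ, c n t) :
    ∀ t, 0 ≤ t →
      Summable (fun n : ℕ => c n t) ∧
      0 ≤ B t ∧ B t ≤ bbar * Real.exp (bbar * t) ∧
      B t = B₀ t + ∫ s in (0 : ℝ)..t, g (t - s) * B s := by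
  intro t ht
  have hbd := renewal_iterate_bounds hB₀meas hgmeas hB₀ hg hc0 hcrec
  have hexp (s : ℝ) :
      HasSum (fun n => bbar * ((bbar * s) ^ n / n !)) (bbar * Real.exp (bbar * s)) :=
    Real.exp_eq_exp_ℝ ▸ (NormedSpace.expSeries_div_hasSum_exp (bbar * s)).mul_left bbar
  have hsum {s : ℝ} (hs : 0 ≤ s) : HasSum (fun n => c n s) (B s) :=
    hB s ▸ (Summable.of_nonneg_of_le (fun n => (hbd n hs).1) (fun n => (hbd n hs).2)
      (hexp s).summable).hasSum
  have hb : 0 ≤ bbar := (hg 0 le_rfl).1.trans (hg 0 le_rfl).2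
  have hsucc : HasSum (fun n => c (n + 1) t) (∫ s in (0 : ℝ)..t, g (t - s) * B s) := by
    simp only [hcrec]
    refine hasSum_integral_conv_of_dominated ht hgmeas
      (fun s hs => abs_le.2 ⟨by linarith [hg s hs.1], (hg s hs.1).2⟩)
      (measurable_renewal_iterate hB₀meas hgmeas hc0 hcrec) (fun n s hs => ?_) (hexp t).summable
      (fun s hs => hsum hs.1)
    rw [abs_of_nonneg (hbd n hs.1).1]
    exact (hbd n hs.1).2.trans (by gcongr; exacts [mul_nonneg hb hs.1, hs.2])
  refine ⟨(hsum ht).summable, (hsum ht).nonneg fun n => (hbd n ht).1,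
    hasSum_le (fun n => (hbd n ht).2) (hsum ht) (hexp t), ?_⟩
  rw [← hc0]
  exact (hsum ht).unique hsucc.zero_add

/-- The renewal series `B(t) = ∑ₙ cₙ(t)` converges, satisfies `0 ≤ B(t) ≤ b̄ e^{b̄ t}`,
and solves the renewal equation `B(t) = B₀(t) + ∫₀^t g(t-s) B(s) ds`. -/
theorem renewal_series_solves_renewal_equation
    (bbar : ℝ) (hbbar : 0 < bbar)
    (B₀ g : ℝ → ℝ) (hB₀meas : Measurable B₀) (hgmeas : Measurable g)
    (hB₀ : ∀ t, 0 ≤ t → 0 ≤ B₀ t ∧ B₀ t ≤ bbar)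
    (hg : ∀ t, 0 ≤ t → 0 ≤ g t ∧ g t ≤ bbar)
    (c : ℕ → ℝ → ℝ)
    (hc0 : ∀ t, c 0 t = B₀ t)
    (hcrec : ∀ n t, c (n + 1) t = ∫ s in (0 : ℝ)..t, g (t - s) * c n s)
    (B : ℝ → ℝ) (hB : ∀ t, B t = ∑' n : ℕ, c n t) :
    ∀ t, 0 ≤ t →
      Summable (fun n : ℕ => c n t) ∧
      0 ≤ B t ∧ B t ≤ bbar * Real.exp (bbar * t) ∧
      B t = B₀ t + ∫ s in (0 : ℝ)..t, g (t - s) * B s :=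
  renewal_series_solves_renewal_equation_general bbar B₀ g hB₀meas hgmeas hB₀ hg c hc0 hcrec B hB
end

section
/- Let v : [0, ∞) × [0, ∞) → [0, ∞) be measurable such that V(t) = ∫₀^∞ v(a, t) da is finite for every t and continuous in t, let N₀, η > 0, and define D(t) = 1 + η N₀ ∫₀^t V(s) ds, n(a, t) = N₀ v(a, t) / D(t), and N(t) = ∫₀^∞ n(a, t) da. Then: (i) N(t) = N₀ V(t) / D(t) for all t ≥ 0; and (ii) if at a point (a, t) with a, t ≥ 0 the map s ↦ v(a + s, t + s) is differentiable at s = 0 with derivative −d(a) v(a, t) for a continuous function d, then s ↦ n(a + s, t + s) is differentiable at s = 0 with derivative −(d(a) + η N(t)) · n(a, t). That is, the normalization by D transforms a solution of the linear McKendrick–von Foerster equation into a solution of the Gurtin–McCamy equation with logistic death rate d(a) + η N(t). -/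
open MeasureTheory Set

/-
Write `n = N₀ v / D`. Since `D` does not depend on age, `N = N₀ V / D` by linearity of the
integral, and the fundamental theorem of calculus gives `D' = η N₀ V`. The quotient rule along a
characteristic then yields `n'/n = v'/v - D'/D = -d(a) - η N₀ V / D = -(d(a) + η N)`.
The quotient rule needs `D ≠ 0`, which holds for `t ≥ 0` because `V ≥ 0` there.
-/

/-- Total mass `V(t) = ∫₀^∞ v(a,t) da`. -/
noncomputable def Vmass (v : ℝ → ℝ → ℝ) (t : ℝ) : ℝ := ∫ a in Ioi (0 : ℝ), v a t

/-- Normalizing denominator `D(t) = 1 + η N₀ ∫₀^t V(s) ds`. -/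
noncomputable def Dnorm (v : ℝ → ℝ → ℝ) (η N₀ t : ℝ) : ℝ :=
  1 + η * N₀ * ∫ s in (0 : ℝ)..t, Vmass v s

/-- Normalized density `n(a,t) = N₀ v(a,t) / D(t)`. -/
noncomputable def nNorm (v : ℝ → ℝ → ℝ) (η N₀ a t : ℝ) : ℝ :=
  N₀ * v a t / Dnorm v η N₀ t

/-- Total population `N(t) = ∫₀^∞ n(a,t) da`. -/
noncomputable def Npop (v : ℝ → ℝ → ℝ) (η N₀ t : ℝ) : ℝ :=
  ∫ a in Ioi (0 : ℝ), nNorm v η N₀ a t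

theorem Npop_eq_mul_Vmass_div_Dnorm (v : ℝ → ℝ → ℝ) (η N₀ t : ℝ) :
    Npop v η N₀ t = N₀ * Vmass v t / Dnorm v η N₀ t := by
  simp only [Npop, nNorm, Vmass, mul_div_right_comm N₀, integral_const_mul]

theorem Vmass_nonneg {v : ℝ → ℝ → ℝ} {t : ℝ} (hv : ∀ a, 0 < a → 0 ≤ v a t) :
    0 ≤ Vmass v t :=
  setIntegral_nonneg measurableSet_Ioi hv

theorem Dnorm_pos {v : ℝ → ℝ → ℝ} {η N₀ t : ℝ} (hV : ∀ s, 0 ≤ s → 0 ≤ Vmass v s)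
    (hη : 0 ≤ η) (hN₀ : 0 ≤ N₀) (ht : 0 ≤ t) : 0 < Dnorm v η N₀ t := by
  have hI : 0 ≤ ∫ s in (0 : ℝ)..t, Vmass v s :=
    intervalIntegral.integral_nonneg ht fun s hs => hV s hs.1
  have := mul_nonneg (mul_nonneg hη hN₀) hI
  rw [Dnorm]
  linarith

theorem hasDerivAt_Dnorm {v : ℝ → ℝ → ℝ} (hV : Continuous (Vmass v)) (η N₀ t : ℝ) :
    HasDerivAt (Dnorm v η N₀) (η * N₀ * Vmass v t) t :=
  (((hV.integral_hasStrictDerivAt 0 t).hasDerivAt).const_mul (η * N₀)).const_add 1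

theorem hasDerivAt_nNorm_along_characteristic {v : ℝ → ℝ → ℝ} (hV : Continuous (Vmass v))
    {η N₀ a t μ : ℝ} (hD : Dnorm v η N₀ t ≠ 0)
    (hv : HasDerivAt (fun s => v (a + s) (t + s)) (-μ * v a t) 0) :
    HasDerivAt (fun s => nNorm v η N₀ (a + s) (t + s))
      (-(μ + η * (N₀ * Vmass v t / Dnorm v η N₀ t)) * nNorm v η N₀ a t) 0 := by
  have hDchar : HasDerivAt (fun s => Dnorm v η N₀ (t + s)) (η * N₀ * Vmass v t) 0 :=
    HasDerivAt.comp_const_add t 0 (by simpa using hasDerivAt_Dnorm hV η N₀ t)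
  refine ((hv.const_mul N₀).div hDchar (by simpa using hD)).congr_deriv ?_
  simp only [add_zero, nNorm]
  field_simp
  ring

theorem normalization_transforms_linear_to_logistic_general
    (d : ℝ → ℝ)
    (v : ℝ → ℝ → ℝ)
    (hvnonneg : ∀ a t, 0 ≤ a → 0 ≤ t → 0 ≤ v a t)
    (hVcont : Continuous (Vmass v))
    (N₀ η : ℝ) (hN₀ : 0 < N₀) (hη : 0 < η) :
    (∀ t, 0 ≤ t → Npop v η N₀ t = N₀ * Vmass v t / Dnorm v η N₀ t) ∧
    (∀ a t, 0 ≤ a → 0 ≤ t →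
      HasDerivAt (fun s => v (a + s) (t + s)) (-(d a) * v a t) 0 →
      HasDerivAt (fun s => nNorm v η N₀ (a + s) (t + s))
        (-(d a + η * Npop v η N₀ t) * nNorm v η N₀ a t) 0) := by
  have hV : ∀ s, 0 ≤ s → 0 ≤ Vmass v s := fun s hs =>
    Vmass_nonneg fun a ha => hvnonneg a s ha.le hs
  refine ⟨fun t _ => Npop_eq_mul_Vmass_div_Dnorm v η N₀ t, fun a t _ ht hv => ?_⟩
  rw [Npop_eq_mul_Vmass_div_Dnorm]
  exact hasDerivAt_nNorm_along_characteristic hVcont (Dnorm_pos hV hη.le hN₀.le ht).ne' hv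

/-- The normalization `n = N₀ v / D` transforms a solution `v` of the linear
McKendrick–von Foerster equation into a solution of the Gurtin–McCamy equation with
logistic death rate `d(a) + η N(t)`:
(i) `N(t) = N₀ V(t)/D(t)`, and (ii) whenever `s ↦ v(a+s,t+s)` has derivative
`-d(a) v(a,t)` at `s = 0`, the map `s ↦ n(a+s,t+s)` has derivative
`-(d(a) + η N(t)) n(a,t)` at `s = 0`. -/
theorem normalization_transforms_linear_to_logistic
    (d : ℝ → ℝ) (hdcont : Continuous d)
    (v : ℝ → ℝ → ℝ) (hvmeas : Measurable (Function.uncurry v))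
    (hvnonneg : ∀ a t, 0 ≤ a → 0 ≤ t → 0 ≤ v a t)
    (hvint : ∀ t, IntegrableOn (fun a => v a t) (Ioi (0 : ℝ)))
    (hVcont : Continuous (Vmass v))
    (N₀ η : ℝ) (hN₀ : 0 < N₀) (hη : 0 < η) :
    (∀ t, 0 ≤ t → Npop v η N₀ t = N₀ * Vmass v t / Dnorm v η N₀ t) ∧
    (∀ a t, 0 ≤ a → 0 ≤ t →
      HasDerivAt (fun s => v (a + s) (t + s)) (-(d a) * v a t) 0 →
      HasDerivAt (fun s => nNorm v η N₀ (a + s) (t + s))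
        (-(d a + η * Npop v η N₀ t) * nNorm v η N₀ a t) 0) :=
  normalization_transforms_linear_to_logistic_general d v hvnonneg hVcont N₀ η hN₀ hη
end

section
/- (Uniqueness for the logistic Gurtin–McCamy equation.) Let n₁, n₂ : [0, ∞) × [0, ∞) → [0, ∞) be continuous functions such that for each i and each t ≥ 0 the function a ↦ n_i(a, t) is integrable with N_i(t) = ∫₀^∞ n_i(a, t) da continuous in t; suppose that for all a, t ≥ 0 the map s ↦ n_i(a + s, t + s) is differentiable at s = 0 with derivative −(d(a) + η N_i(t)) n_i(a, t), that n_i(0, t) = ∫₀^∞ b(a) n_i(a, t) da for all t ≥ 0, and that n₁(a, 0) = n₂(a, 0) for all a ≥ 0. Then n₁ = n₂. -/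
/-!
Along a characteristic the difference `w = n₁ - n₂` solves
`w' = -(d + η N₁) w - η (N₁ - N₂) n₂`, where the damping coefficient is nonnegative and `n₂`
decreases. Hence `|w|` at the end of a characteristic segment is at most `|w|` at its start plus
`η n₂(start) ∫ |N₁ - N₂|`. Characteristics through `(a, t)` start on the boundary `a = 0` when
`a ≤ t` (where `n₂(0, τ) ≤ b̄ N₂(τ)` is bounded) and at time `0` when `a > t` (where `w = 0`).
Integrating in `a` gives `‖w(·, t)‖₁ ≤ ∫₀ᵗ |w(0, τ)| dτ + K ∫₀ᵗ |N₁ - N₂|` on bounded time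
intervals, with `K` depending on a bound for `N₂` there; since
`|w(0, t)| ≤ b̄ ‖w(·, t)‖₁` and `|N₁(t) - N₂(t)| ≤ ‖w(·, t)‖₁`, Grönwall's lemma makes both vanish,
and the characteristic estimate then gives `w = 0`.
-/

open MeasureTheory Set Topology

theorem hasDerivWithinAt_intervalIntegral_Ici {F : ℝ → ℝ} {a b x : ℝ}
    (hF : ContinuousOn F (Icc a b)) (hx : x ∈ Ico a b) :
    HasDerivWithinAt (fun y => ∫ z in a..y, F z) (F x) (Ici x) x := by
  have hmem : Icc a b ∈ 𝓝[>] x := Icc_mem_nhdsGT_of_mem hx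
  refine intervalIntegral.integral_hasDerivWithinAt_right (t := Ioi x)
    ((hF.mono (Icc_subset_Icc_right hx.2.le)).intervalIntegrable_of_Icc hx.1) ?_ ?_
  · exact (hF.stronglyMeasurableAtFilter_nhdsWithin measurableSet_Icc x).filter_mono
      (nhdsWithin_le_of_mem hmem)
  · exact (hF x (Ico_subset_Icc_self hx)).mono_of_mem_nhdsWithin hmem

theorem le_abs_add_integral_of_damped {w c F : ℝ → ℝ} {a b : ℝ}
    (hw : ContinuousOn w (Icc a b))
    (hw' : ∀ x ∈ Ico a b, HasDerivWithinAt w (-c x * w x + F x) (Ici x) x)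
    (hc : ∀ x ∈ Ico a b, 0 ≤ c x) (hF : ContinuousOn F (Icc a b)) :
    ∀ x ∈ Icc a b, w x ≤ |w a| + ∫ y in a..x, |F y| := by
  intro x hx
  set B : ℝ → ℝ := fun y => |w a| + ∫ z in a..y, |F z|
  have hB0 : ∀ y ∈ Icc a b, 0 ≤ B y := fun y hy =>
    add_nonneg (abs_nonneg _) (intervalIntegral.integral_nonneg hy.1 fun _ _ => abs_nonneg _)
  have hBc : ContinuousOn B (Icc a b) :=
    continuousOn_const.add (by
      simpa only [uIcc_of_le (hx.1.trans hx.2)] using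
        intervalIntegral.continuousOn_primitive_interval (μ := volume)
          (hF.abs.integrableOn_Icc.mono_set (uIcc_of_le (hx.1.trans hx.2)).subset))
  -- At a contact point `w y = B y + …` we have `w y ≥ 0`, so the damping `-c y * w y` is `≤ 0`;
  -- the fencing lemma needs a strict inequality, hence the slack `ε`.
  have hfence : ∀ ε > 0, w x ≤ B x + ε * (1 + (x - a)) := by
    intro ε hε
    refine image_le_of_deriv_right_lt_deriv_boundary' hw hw'
      (B := fun y => B y + ε * (1 + (y - a))) (B' := fun y => |F y| + ε) ?_ ?_ ?_ ?_ hx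
    · simp only [B, intervalIntegral.integral_same, sub_self]
      linarith [le_abs_self (w a)]
    · exact hBc.add (by fun_prop)
    · intro y hy
      have hlin : HasDerivWithinAt (fun y => ε * (1 + (y - a))) ε (Ici y) y := by
        simpa using (((hasDerivWithinAt_id y _).sub_const a).const_add 1).const_mul ε
      exact ((hasDerivWithinAt_intervalIntegral_Ici hF.abs hy).const_add _).add hlin
    · intro y hy hwy
      have hwy0 : 0 ≤ w y := by
        rw [hwy]
        nlinarith [hB0 y (Ico_subset_Icc_self hy), hy.1]
      nlinarith [mul_nonneg (hc y hy) hwy0, le_abs_self (F y)]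
  refine le_of_forall_pos_le_add fun δ hδ => ?_
  have h1 : 0 < 1 + (x - a) := by linarith [hx.1]
  have := hfence (δ / (1 + (x - a))) (by positivity)
  rwa [div_mul_cancel₀ _ h1.ne'] at this

theorem abs_le_abs_add_integral_of_damped {w c F : ℝ → ℝ} {a b : ℝ}
    (hw : ContinuousOn w (Icc a b))
    (hw' : ∀ x ∈ Ico a b, HasDerivWithinAt w (-c x * w x + F x) (Ici x) x)
    (hc : ∀ x ∈ Ico a b, 0 ≤ c x) (hF : ContinuousOn F (Icc a b)) :
    ∀ x ∈ Icc a b, |w x| ≤ |w a| + ∫ y in a..x, |F y| := by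
  intro x hx
  have hneg := le_abs_add_integral_of_damped (w := -w) (F := -F) hw.neg
    (fun y hy => (hw' y hy).neg.congr_deriv (by simp only [Pi.neg_apply]; ring)) hc hF.neg x hx
  simp only [Pi.neg_apply, abs_neg] at hneg
  exact abs_le.2 ⟨by linarith, le_abs_add_integral_of_damped hw hw' hc hF x hx⟩

theorem eqOn_zero_of_le_mul_integral {u : ℝ → ℝ} {a b K : ℝ} (hu : ContinuousOn u (Icc a b))
    (hu0 : ∀ x ∈ Icc a b, 0 ≤ u x) (hle : ∀ x ∈ Icc a b, u x ≤ K * ∫ y in a..x, u y) :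
    EqOn u 0 (Icc a b) := by
  have hv0 : ∀ x ∈ Icc a b, 0 ≤ ∫ y in a..x, u y := fun x hx =>
    intervalIntegral.integral_nonneg hx.1 fun y hy => hu0 y ⟨hy.1, hy.2.trans hx.2⟩
  have hvc : ContinuousOn (fun x => ∫ y in a..x, u y) (Icc a b) := by
    rcases le_or_gt a b with hab | hab
    · simpa only [uIcc_of_le hab] using
        intervalIntegral.continuousOn_primitive_interval (μ := volume)
          (hu.integrableOn_Icc.mono_set (uIcc_of_le hab).subset)
    · simp [Icc_eq_empty_of_lt hab]
  have hv : ∀ x ∈ Icc a b, ∫ y in a..x, u y = 0 :=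
    eq_zero_of_abs_deriv_le_mul_abs_self_of_eq_zero_right (K := max K 0) hvc
      (fun x hx => hasDerivWithinAt_intervalIntegral_Ici hu hx) intervalIntegral.integral_same
      fun x hx => by
        have hx' := Ico_subset_Icc_self hx
        rw [Real.norm_of_nonneg (hu0 x hx'), Real.norm_of_nonneg (hv0 x hx')]
        exact (hle x hx').trans (mul_le_mul_of_nonneg_right (le_max_left K 0) (hv0 x hx'))
  intro x hx
  exact le_antisymm (by simpa [hv x hx] using hle x hx) (hu0 x hx)

section Characteristics

variable {μ n : ℝ → ℝ → ℝ}

theorem hasDerivAt_characteristic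
    (hn : ∀ a t, 0 ≤ a → 0 ≤ t → HasDerivAt (fun s => n (a + s) (t + s)) (-μ a t * n a t) 0)
    {a t s : ℝ} (ha : 0 ≤ a) (ht : 0 ≤ t) (hs : 0 ≤ s) :
    HasDerivAt (fun s => n (a + s) (t + s)) (-μ (a + s) (t + s) * n (a + s) (t + s)) s := by
  have h := HasDerivAt.comp_sub_const s s
    (by rw [sub_self]; exact hn (a + s) (t + s) (by linarith) (by linarith))
  have e : (fun r => n (a + s + (r - s)) (t + s + (r - s))) = fun r => n (a + r) (t + r) := by
    funext r
    congr 1 <;> ring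
  rwa [e] at h

theorem continuousOn_characteristic
    (hn : ∀ a t, 0 ≤ a → 0 ≤ t → HasDerivAt (fun s => n (a + s) (t + s)) (-μ a t * n a t) 0)
    {a t : ℝ} (ha : 0 ≤ a) (ht : 0 ≤ t) :
    ContinuousOn (fun s => n (a + s) (t + s)) (Ici 0) := fun _ hs =>
  (hasDerivAt_characteristic hn ha ht hs).continuousAt.continuousWithinAt

theorem antitoneOn_characteristic
    (hn : ∀ a t, 0 ≤ a → 0 ≤ t → HasDerivAt (fun s => n (a + s) (t + s)) (-μ a t * n a t) 0)
    (hμ : ∀ a t, 0 ≤ a → 0 ≤ t → 0 ≤ μ a t) (hn₀ : ∀ a t, 0 ≤ a → 0 ≤ t → 0 ≤ n a t)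
    {a t : ℝ} (ha : 0 ≤ a) (ht : 0 ≤ t) :
    AntitoneOn (fun s => n (a + s) (t + s)) (Ici 0) := by
  refine antitoneOn_of_hasDerivWithinAt_nonpos (convex_Ici 0)
    (f' := fun s => -μ (a + s) (t + s) * n (a + s) (t + s))
    (continuousOn_characteristic hn ha ht) (fun s hs => ?_) fun s hs => ?_
  · rw [interior_Ici] at hs
    exact (hasDerivAt_characteristic hn ha ht (le_of_lt hs)).hasDerivWithinAt
  · rw [interior_Ici, mem_Ioi] at hs
    rw [neg_mul, neg_nonpos]
    exact mul_nonneg (hμ _ _ (by linarith) (by linarith)) (hn₀ _ _ (by linarith) (by linarith))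

theorem abs_sub_le_along_characteristic {μ₁ μ₂ n₁ n₂ : ℝ → ℝ → ℝ}
    (hn₁ : ∀ a t, 0 ≤ a → 0 ≤ t →
      HasDerivAt (fun s => n₁ (a + s) (t + s)) (-μ₁ a t * n₁ a t) 0)
    (hn₂ : ∀ a t, 0 ≤ a → 0 ≤ t →
      HasDerivAt (fun s => n₂ (a + s) (t + s)) (-μ₂ a t * n₂ a t) 0)
    (hμ₁ : ∀ a t, 0 ≤ a → 0 ≤ t → 0 ≤ μ₁ a t) (hμ₂ : ∀ a t, 0 ≤ a → 0 ≤ t → 0 ≤ μ₂ a t)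
    (hn₂₀ : ∀ a t, 0 ≤ a → 0 ≤ t → 0 ≤ n₂ a t) {a t m : ℝ} (ha : 0 ≤ a) (ht : 0 ≤ t)
    (hm : 0 ≤ m)
    (hμ : ContinuousOn (fun s => μ₁ (a + s) (t + s) - μ₂ (a + s) (t + s)) (Icc 0 m)) :
    |n₁ (a + m) (t + m) - n₂ (a + m) (t + m)| ≤
      |n₁ a t - n₂ a t| + n₂ a t * ∫ s in 0..m, |μ₁ (a + s) (t + s) - μ₂ (a + s) (t + s)| := by
  have hn₂c : ContinuousOn (fun s => n₂ (a + s) (t + s)) (Icc 0 m) :=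
    (continuousOn_characteristic hn₂ ha ht).mono Icc_subset_Ici_self
  have hdamped := abs_le_abs_add_integral_of_damped
    (w := fun s => n₁ (a + s) (t + s) - n₂ (a + s) (t + s)) (c := fun s => μ₁ (a + s) (t + s))
    (F := fun s => -(μ₁ (a + s) (t + s) - μ₂ (a + s) (t + s)) * n₂ (a + s) (t + s))
    ((continuousOn_characteristic hn₁ ha ht).sub (continuousOn_characteristic hn₂ ha ht)
      |>.mono Icc_subset_Ici_self)
    (fun s hs => ((hasDerivAt_characteristic hn₁ ha ht hs.1).sub
      (hasDerivAt_characteristic hn₂ ha ht hs.1)).hasDerivWithinAt.congr_deriv (by ring))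
    (fun s hs => hμ₁ _ _ (by linarith [hs.1]) (by linarith [hs.1])) (hμ.neg.mul hn₂c)
    m ⟨hm, le_rfl⟩
  have hdecay : ∫ s in 0..m, |-(μ₁ (a + s) (t + s) - μ₂ (a + s) (t + s)) * n₂ (a + s) (t + s)|
      ≤ ∫ s in 0..m, |μ₁ (a + s) (t + s) - μ₂ (a + s) (t + s)| * n₂ a t := by
    refine intervalIntegral.integral_mono_on hm
      ((hμ.neg.mul hn₂c).abs.intervalIntegrable_of_Icc hm)
      ((hμ.abs.mul continuousOn_const).intervalIntegrable_of_Icc hm) fun s hs => ?_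
    have hanti := antitoneOn_characteristic hn₂ hμ₂ hn₂₀ ha ht self_mem_Ici hs.1 hs.1
    simp only [add_zero] at hanti
    rw [abs_mul, abs_neg, abs_of_nonneg (hn₂₀ _ _ (by linarith [hs.1]) (by linarith [hs.1]))]
    exact mul_le_mul_of_nonneg_left hanti (abs_nonneg _)
  rw [intervalIntegral.integral_mul_const] at hdecay
  simp only [add_zero] at hdamped
  linarith [mul_comm (n₂ a t) (∫ s in 0..m, |μ₁ (a + s) (t + s) - μ₂ (a + s) (t + s)|)]

end Characteristics

theorem setIntegral_Ioi_comp_sub {E : Type*} [NormedAddCommGroup E] [NormedSpace ℝ E]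
    (f : ℝ → E) (t : ℝ) : ∫ a in Ioi t, f (a - t) = ∫ a in Ioi 0, f a := by
  have h := (measurePreserving_sub_right volume t).setIntegral_preimage_emb
    (measurableEmbedding_subRight t) f (Ioi 0)
  rwa [preimage_sub_const_Ioi, zero_add] at h

theorem integrableOn_Ioi_comp_sub {E : Type*} [NormedAddCommGroup E] {f : ℝ → E} {t : ℝ}
    (hf : IntegrableOn f (Ioi 0)) : IntegrableOn (fun a => f (a - t)) (Ioi t) := by
  have h := (measurePreserving_sub_right volume t).integrableOn_comp_preimage
    (measurableEmbedding_subRight t) (f := f) (s := Ioi 0)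
  rw [preimage_sub_const_Ioi, zero_add] at h
  exact h.2 hf

namespace GurtinMcCamy

noncomputable def totalMass (n : ℝ → ℝ → ℝ) (t : ℝ) : ℝ := ∫ a in Ioi 0, n a t

structure IsSolution (b d : ℝ → ℝ) (η : ℝ) (n : ℝ → ℝ → ℝ) : Prop where
  continuousOn : ContinuousOn (Function.uncurry n) (Ici 0 ×ˢ Ici 0)
  nonneg : ∀ a t, 0 ≤ a → 0 ≤ t → 0 ≤ n a t
  integrableOn : ∀ t, 0 ≤ t → IntegrableOn (fun a => n a t) (Ioi 0)
  continuousOn_totalMass : ContinuousOn (totalMass n) (Ici 0)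
  hasDerivAt_characteristic : ∀ a t, 0 ≤ a → 0 ≤ t →
    HasDerivAt (fun s => n (a + s) (t + s)) (-(d a + η * totalMass n t) * n a t) 0
  birth : ∀ t, 0 ≤ t → n 0 t = ∫ a in Ioi 0, b a * n a t

namespace IsSolution

variable {b d : ℝ → ℝ} {η bbar : ℝ} {n n₁ n₂ : ℝ → ℝ → ℝ} {t : ℝ}

theorem totalMass_nonneg (h : IsSolution b d η n) (ht : 0 ≤ t) : 0 ≤ totalMass n t :=
  setIntegral_nonneg measurableSet_Ioi fun a ha => h.nonneg a t (le_of_lt ha) ht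

theorem continuousOn_boundary (h : IsSolution b d η n) : ContinuousOn (n 0) (Ici 0) :=
  h.continuousOn.comp (continuousOn_const.prodMk continuousOn_id) fun _ hτ =>
    mem_prod.2 ⟨self_mem_Ici, hτ⟩

theorem integrableOn_birth (h : IsSolution b d η n) (hb : Measurable b) (hb₀ : ∀ a, 0 ≤ b a)
    (hbbar : ∀ a, b a ≤ bbar) (ht : 0 ≤ t) : IntegrableOn (fun a => b a * n a t) (Ioi 0) :=
  (h.integrableOn t ht).bdd_mul hb.aestronglyMeasurable
    (ae_of_all _ fun a => (Real.norm_of_nonneg (hb₀ a)).trans_le (hbbar a))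

theorem boundary_le (h : IsSolution b d η n) (hb : Measurable b) (hb₀ : ∀ a, 0 ≤ b a)
    (hbbar : ∀ a, b a ≤ bbar) (ht : 0 ≤ t) : n 0 t ≤ bbar * totalMass n t := by
  rw [h.birth t ht, totalMass, ← integral_const_mul]
  exact setIntegral_mono_on (h.integrableOn_birth hb hb₀ hbbar ht)
    ((h.integrableOn t ht).const_mul _) measurableSet_Ioi fun a ha =>
      mul_le_mul_of_nonneg_right (hbbar a) (h.nonneg a t (le_of_lt ha) ht)

theorem integrableOn_abs_sub (h₁ : IsSolution b d η n₁) (h₂ : IsSolution b d η n₂)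
    (ht : 0 ≤ t) : IntegrableOn (fun a => |n₁ a t - n₂ a t|) (Ioi 0) :=
  ((h₁.integrableOn t ht).sub (h₂.integrableOn t ht)).abs

theorem abs_boundary_sub_le (h₁ : IsSolution b d η n₁) (h₂ : IsSolution b d η n₂)
    (hb : Measurable b) (hb₀ : ∀ a, 0 ≤ b a) (hbbar : ∀ a, b a ≤ bbar) (ht : 0 ≤ t) :
    |n₁ 0 t - n₂ 0 t| ≤ bbar * ∫ a in Ioi 0, |n₁ a t - n₂ a t| := by
  have hi₁ := h₁.integrableOn_birth hb hb₀ hbbar ht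
  have hi₂ := h₂.integrableOn_birth hb hb₀ hbbar ht
  rw [h₁.birth t ht, h₂.birth t ht, ← integral_sub hi₁ hi₂, ← integral_const_mul]
  refine abs_integral_le_integral_abs.trans <| setIntegral_mono_on (hi₁.sub hi₂).abs
    ((h₁.integrableOn_abs_sub h₂ ht).const_mul _) measurableSet_Ioi
    fun a _ => ?_
  rw [← mul_sub, abs_mul, abs_of_nonneg (hb₀ a)]
  exact mul_le_mul_of_nonneg_right (hbbar a) (abs_nonneg _)

theorem abs_totalMass_sub_le (h₁ : IsSolution b d η n₁) (h₂ : IsSolution b d η n₂)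
    (ht : 0 ≤ t) : |totalMass n₁ t - totalMass n₂ t| ≤ ∫ a in Ioi 0, |n₁ a t - n₂ a t| := by
  rw [totalMass, totalMass, ← integral_sub (h₁.integrableOn t ht) (h₂.integrableOn t ht)]
  exact abs_integral_le_integral_abs

theorem abs_sub_le_along_characteristic (h₁ : IsSolution b d η n₁) (h₂ : IsSolution b d η n₂)
    (hd : ∀ a, 0 ≤ a → 0 ≤ d a) (hη : 0 ≤ η) {a m : ℝ} (ha : 0 ≤ a) (ht : 0 ≤ t) (hm : 0 ≤ m) :
    |n₁ (a + m) (t + m) - n₂ (a + m) (t + m)| ≤ |n₁ a t - n₂ a t|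
      + η * n₂ a t * ∫ τ in 0..t + m, |totalMass n₁ τ - totalMass n₂ τ| := by
  have hΔ : ContinuousOn (fun τ => totalMass n₁ τ - totalMass n₂ τ) (Ici 0) :=
    h₁.continuousOn_totalMass.sub h₂.continuousOn_totalMass
  have hΔshift : ContinuousOn (fun s => totalMass n₁ (t + s) - totalMass n₂ (t + s)) (Icc 0 m) :=
    hΔ.comp (continuousOn_const.add continuousOn_id) fun s hs =>
      mem_Ici.2 (add_nonneg ht hs.1)
  have hchar := _root_.abs_sub_le_along_characteristic (μ₁ := fun a t => d a + η * totalMass n₁ t)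
    (μ₂ := fun a t => d a + η * totalMass n₂ t) h₁.hasDerivAt_characteristic
    h₂.hasDerivAt_characteristic
    (fun a t ha ht => add_nonneg (hd a ha) (mul_nonneg hη (h₁.totalMass_nonneg ht)))
    (fun a t ha ht => add_nonneg (hd a ha) (mul_nonneg hη (h₂.totalMass_nonneg ht)))
    h₂.nonneg ha ht hm (((continuousOn_const (c := η)).mul hΔshift).congr fun s _ => by
      simp only [Pi.mul_apply]; ring)
  have hrate : ∫ s in 0..m, |d (a + s) + η * totalMass n₁ (t + s)
      - (d (a + s) + η * totalMass n₂ (t + s))|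
      = η * ∫ τ in t..t + m, |totalMass n₁ τ - totalMass n₂ τ| := by
    simp_rw [add_sub_add_left_eq_sub, ← mul_sub, abs_mul, abs_of_nonneg hη]
    rw [intervalIntegral.integral_const_mul,
      intervalIntegral.integral_comp_add_left (fun τ => |totalMass n₁ τ - totalMass n₂ τ|),
      add_zero]
  have hwindow : ∫ τ in t..t + m, |totalMass n₁ τ - totalMass n₂ τ|
      ≤ ∫ τ in 0..t + m, |totalMass n₁ τ - totalMass n₂ τ| :=
    intervalIntegral.integral_mono_interval ht (by linarith) le_rfl
      (ae_of_all _ fun _ => abs_nonneg _)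
      ((hΔ.abs.mono Icc_subset_Ici_self).intervalIntegrable_of_Icc (by linarith))
  have hn₂ := h₂.nonneg a t ha ht
  rw [hrate] at hchar
  nlinarith [mul_le_mul_of_nonneg_left hwindow (mul_nonneg hη hn₂)]

theorem abs_sub_le_of_le (h₁ : IsSolution b d η n₁) (h₂ : IsSolution b d η n₂)
    (hd : ∀ a, 0 ≤ a → 0 ≤ d a) (hη : 0 ≤ η) {a : ℝ} (ha : 0 ≤ a) (hat : a ≤ t) :
    |n₁ a t - n₂ a t| ≤ |n₁ 0 (t - a) - n₂ 0 (t - a)|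
      + η * n₂ 0 (t - a) * ∫ τ in 0..t, |totalMass n₁ τ - totalMass n₂ τ| := by
  simpa using h₁.abs_sub_le_along_characteristic h₂ hd hη le_rfl (sub_nonneg.2 hat) ha

theorem abs_sub_le_of_ge (h₁ : IsSolution b d η n₁) (h₂ : IsSolution b d η n₂)
    (hd : ∀ a, 0 ≤ a → 0 ≤ d a) (hη : 0 ≤ η) (hinit : ∀ a, 0 ≤ a → n₁ a 0 = n₂ a 0) {a : ℝ}
    (ht : 0 ≤ t) (hta : t ≤ a) :
    |n₁ a t - n₂ a t| ≤ η * n₂ (a - t) 0 * ∫ τ in 0..t, |totalMass n₁ τ - totalMass n₂ τ| := by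
  simpa [hinit (a - t) (sub_nonneg.2 hta)] using
    h₁.abs_sub_le_along_characteristic h₂ hd hη (sub_nonneg.2 hta) le_rfl ht

theorem setIntegral_Ioc_abs_sub_le (h₁ : IsSolution b d η n₁) (h₂ : IsSolution b d η n₂)
    (hb : Measurable b) (hb₀ : ∀ a, 0 ≤ b a) (hbbar : ∀ a, b a ≤ bbar)
    (hd : ∀ a, 0 ≤ a → 0 ≤ d a) (hη : 0 ≤ η) {C : ℝ}
    (hC : ∀ τ ∈ Icc 0 t, totalMass n₂ τ ≤ C) (ht : 0 ≤ t) :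
    ∫ a in Ioc 0 t, |n₁ a t - n₂ a t| ≤ (∫ τ in 0..t, |n₁ 0 τ - n₂ 0 τ|)
      + t * (η * (bbar * C) * ∫ τ in 0..t, |totalMass n₁ τ - totalMass n₂ τ|) := by
  set J := ∫ τ in 0..t, |totalMass n₁ τ - totalMass n₂ τ|
  have hJ : 0 ≤ J := intervalIntegral.integral_nonneg ht fun _ _ => abs_nonneg _
  have hbbar₀ : 0 ≤ bbar := (hb₀ 0).trans (hbbar 0)
  have hw₀ : ContinuousOn (fun a => |n₁ 0 (t - a) - n₂ 0 (t - a)|) (Icc 0 t) :=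
    (h₁.continuousOn_boundary.sub h₂.continuousOn_boundary).abs.comp
      (continuousOn_const.sub continuousOn_id) fun a ha =>
        mem_Ici.2 (sub_nonneg.2 ha.2)
  rw [← intervalIntegral.integral_of_le ht]
  calc ∫ a in 0..t, |n₁ a t - n₂ a t|
      ≤ ∫ a in 0..t, (|n₁ 0 (t - a) - n₂ 0 (t - a)| + η * (bbar * C) * J) := by
        refine intervalIntegral.integral_mono_on ht
          ((intervalIntegrable_iff_integrableOn_Ioc_of_le ht).2 ?_)
          ((hw₀.add continuousOn_const).intervalIntegrable_of_Icc ht) fun a ha => ?_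
        · exact (h₁.integrableOn_abs_sub h₂ ht).mono_set Ioc_subset_Ioi_self
        · have hta : 0 ≤ t - a := sub_nonneg.2 ha.2
          have hn₂ : n₂ 0 (t - a) ≤ bbar * C := (h₂.boundary_le hb hb₀ hbbar hta).trans
            (mul_le_mul_of_nonneg_left (hC _ ⟨hta, by linarith [ha.1]⟩) hbbar₀)
          have := h₁.abs_sub_le_of_le h₂ hd hη ha.1 ha.2
          nlinarith [mul_le_mul_of_nonneg_left hn₂ (mul_nonneg hη hJ)]
    _ = (∫ τ in 0..t, |n₁ 0 τ - n₂ 0 τ|) + t * (η * (bbar * C) * J) := by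
        rw [intervalIntegral.integral_add (hw₀.intervalIntegrable_of_Icc ht)
          intervalIntegrable_const,
          intervalIntegral.integral_comp_sub_left (fun τ => |n₁ 0 τ - n₂ 0 τ|),
          intervalIntegral.integral_const, sub_self, sub_zero, smul_eq_mul]

theorem setIntegral_Ioi_abs_sub_le (h₁ : IsSolution b d η n₁) (h₂ : IsSolution b d η n₂)
    (hd : ∀ a, 0 ≤ a → 0 ≤ d a) (hη : 0 ≤ η) (hinit : ∀ a, 0 ≤ a → n₁ a 0 = n₂ a 0)
    (ht : 0 ≤ t) :
    ∫ a in Ioi t, |n₁ a t - n₂ a t|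
      ≤ η * totalMass n₂ 0 * ∫ τ in 0..t, |totalMass n₁ τ - totalMass n₂ τ| := by
  set J := ∫ τ in 0..t, |totalMass n₁ τ - totalMass n₂ τ|
  calc ∫ a in Ioi t, |n₁ a t - n₂ a t| ≤ ∫ a in Ioi t, η * J * n₂ (a - t) 0 := by
        refine setIntegral_mono_on ((h₁.integrableOn_abs_sub h₂ ht).mono_set (Ioi_subset_Ioi ht))
          ((integrableOn_Ioi_comp_sub (h₂.integrableOn 0 le_rfl)).const_mul _)
          measurableSet_Ioi fun a ha => ?_
        have := h₁.abs_sub_le_of_ge h₂ hd hη hinit ht (le_of_lt ha)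
        linarith [mul_right_comm η (n₂ (a - t) 0) J]
    _ = η * totalMass n₂ 0 * J := by
        rw [integral_const_mul, setIntegral_Ioi_comp_sub (fun a => n₂ a 0), totalMass]
        ring

theorem integral_abs_sub_le (h₁ : IsSolution b d η n₁) (h₂ : IsSolution b d η n₂)
    (hb : Measurable b) (hb₀ : ∀ a, 0 ≤ b a) (hbbar : ∀ a, b a ≤ bbar)
    (hd : ∀ a, 0 ≤ a → 0 ≤ d a) (hη : 0 ≤ η) (hinit : ∀ a, 0 ≤ a → n₁ a 0 = n₂ a 0) {C T : ℝ}
    (hC : ∀ τ ∈ Icc 0 T, totalMass n₂ τ ≤ C) (ht : t ∈ Icc 0 T) :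
    ∫ a in Ioi 0, |n₁ a t - n₂ a t| ≤ (∫ τ in 0..t, |n₁ 0 τ - n₂ 0 τ|)
      + η * C * (bbar * T + 1) * ∫ τ in 0..t, |totalMass n₁ τ - totalMass n₂ τ| := by
  set J := ∫ τ in 0..t, |totalMass n₁ τ - totalMass n₂ τ|
  have hJ : 0 ≤ J := intervalIntegral.integral_nonneg ht.1 fun _ _ => abs_nonneg _
  have hbbar₀ : 0 ≤ bbar := (hb₀ 0).trans (hbbar 0)
  have hN₀ : totalMass n₂ 0 ≤ C := hC 0 ⟨le_rfl, ht.1.trans ht.2⟩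
  have hC₀ : 0 ≤ C := (h₂.totalMass_nonneg le_rfl).trans hN₀
  have hw := h₁.integrableOn_abs_sub h₂ ht.1
  rw [← Ioc_union_Ioi_eq_Ioi ht.1, setIntegral_union (Ioc_disjoint_Ioi le_rfl) measurableSet_Ioi
    (hw.mono_set Ioc_subset_Ioi_self) (hw.mono_set (Ioi_subset_Ioi ht.1))]
  have hIoc := h₁.setIntegral_Ioc_abs_sub_le h₂ hb hb₀ hbbar hd hη
    (fun τ hτ => hC τ ⟨hτ.1, hτ.2.trans ht.2⟩) ht.1
  have hIoi := h₁.setIntegral_Ioi_abs_sub_le h₂ hd hη hinit ht.1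
  have hT : t * (η * (bbar * C) * J) ≤ T * (η * (bbar * C) * J) :=
    mul_le_mul_of_nonneg_right ht.2 (mul_nonneg (mul_nonneg hη (mul_nonneg hbbar₀ hC₀)) hJ)
  have hN : η * totalMass n₂ 0 * J ≤ η * C * J :=
    mul_le_mul_of_nonneg_right (mul_le_mul_of_nonneg_left hN₀ hη) hJ
  linarith

theorem abs_boundary_sub_add_abs_totalMass_sub_le (h₁ : IsSolution b d η n₁)
    (h₂ : IsSolution b d η n₂) (hb : Measurable b) (hb₀ : ∀ a, 0 ≤ b a)
    (hbbar : ∀ a, b a ≤ bbar) (hd : ∀ a, 0 ≤ a → 0 ≤ d a) (hη : 0 ≤ η)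
    (hinit : ∀ a, 0 ≤ a → n₁ a 0 = n₂ a 0) {C T : ℝ} (hC : ∀ τ ∈ Icc 0 T, totalMass n₂ τ ≤ C)
    (ht : t ∈ Icc 0 T) :
    |n₁ 0 t - n₂ 0 t| + |totalMass n₁ t - totalMass n₂ t| ≤
      (bbar + 1) * (1 + η * C * (bbar * T + 1)) *
        ∫ τ in 0..t, (|n₁ 0 τ - n₂ 0 τ| + |totalMass n₁ τ - totalMass n₂ τ|) := by
  have hbbar₀ : 0 ≤ bbar := (hb₀ 0).trans (hbbar 0)
  have hC₀ : 0 ≤ C := (h₂.totalMass_nonneg le_rfl).trans (hC 0 ⟨le_rfl, ht.1.trans ht.2⟩)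
  have hK : 0 ≤ η * C * (bbar * T + 1) :=
    mul_nonneg (mul_nonneg hη hC₀) (by nlinarith [ht.1.trans ht.2])
  have hw₀ : ContinuousOn (fun τ => |n₁ 0 τ - n₂ 0 τ|) (Icc 0 t) :=
    (h₁.continuousOn_boundary.sub h₂.continuousOn_boundary).abs.mono Icc_subset_Ici_self
  have hΔ : ContinuousOn (fun τ => |totalMass n₁ τ - totalMass n₂ τ|) (Icc 0 t) :=
    (h₁.continuousOn_totalMass.sub h₂.continuousOn_totalMass).abs.mono Icc_subset_Ici_self
  set U := ∫ τ in 0..t, (|n₁ 0 τ - n₂ 0 τ| + |totalMass n₁ τ - totalMass n₂ τ|)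
  have hw₀u : ∫ τ in 0..t, |n₁ 0 τ - n₂ 0 τ| ≤ U :=
    intervalIntegral.integral_mono_on ht.1 (hw₀.intervalIntegrable_of_Icc ht.1)
      ((hw₀.add hΔ).intervalIntegrable_of_Icc ht.1) fun _ _ => le_add_of_nonneg_right (abs_nonneg _)
  have hΔu : ∫ τ in 0..t, |totalMass n₁ τ - totalMass n₂ τ| ≤ U :=
    intervalIntegral.integral_mono_on ht.1 (hΔ.intervalIntegrable_of_Icc ht.1)
      ((hw₀.add hΔ).intervalIntegrable_of_Icc ht.1) fun _ _ => le_add_of_nonneg_left (abs_nonneg _)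
  have hφ := h₁.integral_abs_sub_le h₂ hb hb₀ hbbar hd hη hinit hC ht
  have hbdry := h₁.abs_boundary_sub_le h₂ hb hb₀ hbbar ht.1
  have hmass := h₁.abs_totalMass_sub_le h₂ ht.1
  calc |n₁ 0 t - n₂ 0 t| + |totalMass n₁ t - totalMass n₂ t|
      ≤ (bbar + 1) * ∫ a in Ioi 0, |n₁ a t - n₂ a t| := by linarith
    _ ≤ (bbar + 1) * (U + η * C * (bbar * T + 1) * U) :=
        mul_le_mul_of_nonneg_left
          (hφ.trans (add_le_add hw₀u (mul_le_mul_of_nonneg_left hΔu hK))) (by linarith)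
    _ = (bbar + 1) * (1 + η * C * (bbar * T + 1)) * U := by ring

theorem boundary_eq_and_totalMass_eq (h₁ : IsSolution b d η n₁) (h₂ : IsSolution b d η n₂)
    (hb : Measurable b) (hb₀ : ∀ a, 0 ≤ b a) (hbbar : ∀ a, b a ≤ bbar)
    (hd : ∀ a, 0 ≤ a → 0 ≤ d a) (hη : 0 ≤ η) (hinit : ∀ a, 0 ≤ a → n₁ a 0 = n₂ a 0)
    (ht : 0 ≤ t) : n₁ 0 t = n₂ 0 t ∧ totalMass n₁ t = totalMass n₂ t := by
  obtain ⟨C, hC⟩ := (isCompact_Icc (a := 0) (b := t)).exists_bound_of_continuousOn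
    (h₂.continuousOn_totalMass.mono Icc_subset_Ici_self)
  have hzero := eqOn_zero_of_le_mul_integral
    ((h₁.continuousOn_boundary.sub h₂.continuousOn_boundary).abs.add
      (h₁.continuousOn_totalMass.sub h₂.continuousOn_totalMass).abs |>.mono Icc_subset_Ici_self)
    (fun _ _ => add_nonneg (abs_nonneg _) (abs_nonneg _))
    fun τ hτ => h₁.abs_boundary_sub_add_abs_totalMass_sub_le h₂ hb hb₀ hbbar hd hη hinit
      (fun τ hτ => (le_abs_self _).trans (hC τ hτ)) hτ
  have hut : |n₁ 0 t - n₂ 0 t| + |totalMass n₁ t - totalMass n₂ t| = 0 := hzero ⟨ht, le_rfl⟩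
  have h₁₀ := abs_nonneg (n₁ 0 t - n₂ 0 t)
  have h₂₀ := abs_nonneg (totalMass n₁ t - totalMass n₂ t)
  exact ⟨sub_eq_zero.1 (abs_eq_zero.1 (by linarith)), sub_eq_zero.1 (abs_eq_zero.1 (by linarith))⟩

theorem eq_of_initial_eq (h₁ : IsSolution b d η n₁) (h₂ : IsSolution b d η n₂)
    (hb : Measurable b) (hb₀ : ∀ a, 0 ≤ b a) (hbbar : ∀ a, b a ≤ bbar)
    (hd : ∀ a, 0 ≤ a → 0 ≤ d a) (hη : 0 ≤ η) (hinit : ∀ a, 0 ≤ a → n₁ a 0 = n₂ a 0) {a : ℝ}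
    (ha : 0 ≤ a) (ht : 0 ≤ t) : n₁ a t = n₂ a t := by
  have hsame := fun τ (hτ : 0 ≤ τ) =>
    h₁.boundary_eq_and_totalMass_eq h₂ hb hb₀ hbbar hd hη hinit hτ
  have hJ : ∫ τ in 0..t, |totalMass n₁ τ - totalMass n₂ τ| = 0 := by
    rw [intervalIntegral.integral_congr (g := fun _ => (0 : ℝ)) fun τ hτ => ?_]
    · simp
    rw [uIcc_of_le ht] at hτ
    simp [(hsame τ hτ.1).2]
  rw [← sub_eq_zero, ← abs_nonpos_iff]
  rcases le_total a t with hat | hta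
  · simpa [hJ, (hsame (t - a) (sub_nonneg.2 hat)).1] using h₁.abs_sub_le_of_le h₂ hd hη ha hat
  · simpa [hJ] using h₁.abs_sub_le_of_ge h₂ hd hη hinit ht hta

end IsSolution

end GurtinMcCamy

theorem logistic_gurtin_mccamy_unique_general
    (b d : ℝ → ℝ) (bbar dlow η : ℝ)
    (hbcont : Continuous b) (hb0 : ∀ a, 0 ≤ b a) (hbbar : ∀ a, b a ≤ bbar)
    (hdlow : ∀ a, 0 ≤ a → dlow ≤ d a) (hdlowpos : 0 < dlow)
    (hη : 0 < η)
    (n₁ n₂ : ℝ → ℝ → ℝ)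
    (hcont₁ : ContinuousOn (Function.uncurry n₁) (Ici (0 : ℝ) ×ˢ Ici (0 : ℝ)))
    (hcont₂ : ContinuousOn (Function.uncurry n₂) (Ici (0 : ℝ) ×ˢ Ici (0 : ℝ)))
    (hnn₁ : ∀ a t, 0 ≤ a → 0 ≤ t → 0 ≤ n₁ a t)
    (hnn₂ : ∀ a t, 0 ≤ a → 0 ≤ t → 0 ≤ n₂ a t)
    (hint₁ : ∀ t, 0 ≤ t → IntegrableOn (fun a => n₁ a t) (Ioi (0 : ℝ)))
    (hint₂ : ∀ t, 0 ≤ t → IntegrableOn (fun a => n₂ a t) (Ioi (0 : ℝ)))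
    (hNcont₁ : ContinuousOn (fun t => ∫ a in Ioi (0 : ℝ), n₁ a t) (Ici (0 : ℝ)))
    (hNcont₂ : ContinuousOn (fun t => ∫ a in Ioi (0 : ℝ), n₂ a t) (Ici (0 : ℝ)))
    (hderiv₁ : ∀ a t, 0 ≤ a → 0 ≤ t →
      HasDerivAt (fun s => n₁ (a + s) (t + s))
        (-(d a + η * ∫ α in Ioi (0 : ℝ), n₁ α t) * n₁ a t) 0)
    (hderiv₂ : ∀ a t, 0 ≤ a → 0 ≤ t →
      HasDerivAt (fun s => n₂ (a + s) (t + s))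
        (-(d a + η * ∫ α in Ioi (0 : ℝ), n₂ α t) * n₂ a t) 0)
    (hbc₁ : ∀ t, 0 ≤ t → n₁ 0 t = ∫ a in Ioi (0 : ℝ), b a * n₁ a t)
    (hbc₂ : ∀ t, 0 ≤ t → n₂ 0 t = ∫ a in Ioi (0 : ℝ), b a * n₂ a t)
    (hinit : ∀ a, 0 ≤ a → n₁ a 0 = n₂ a 0) :
    ∀ a t, 0 ≤ a → 0 ≤ t → n₁ a t = n₂ a t := by
  have h₁ : GurtinMcCamy.IsSolution b d η n₁ := ⟨hcont₁, hnn₁, hint₁, hNcont₁, hderiv₁, hbc₁⟩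
  have h₂ : GurtinMcCamy.IsSolution b d η n₂ := ⟨hcont₂, hnn₂, hint₂, hNcont₂, hderiv₂, hbc₂⟩
  have hd : ∀ a, 0 ≤ a → 0 ≤ d a := fun a ha => hdlowpos.le.trans (hdlow a ha)
  exact fun a t ha ht =>
    h₁.eq_of_initial_eq h₂ hbcont.measurable hb0 hbbar hd hη.le hinit ha ht

/-- Uniqueness for the logistic Gurtin–McCamy equation: two continuous nonnegative
solutions (along characteristics, with integrable age sections, continuous total mass,
the birth boundary condition, and the same initial condition) coincide on
`[0,∞) × [0,∞)`. -/
theorem logistic_gurtin_mccamy_unique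
    (b d : ℝ → ℝ) (bbar dlow η : ℝ)
    (hbcont : Continuous b) (hb0 : ∀ a, 0 ≤ b a) (hbbar : ∀ a, b a ≤ bbar)
    (hbbarpos : 0 < bbar)
    (hdcont : Continuous d) (hdlow : ∀ a, 0 ≤ a → dlow ≤ d a) (hdlowpos : 0 < dlow)
    (hη : 0 < η)
    (n₁ n₂ : ℝ → ℝ → ℝ)
    (hcont₁ : ContinuousOn (Function.uncurry n₁) (Ici (0 : ℝ) ×ˢ Ici (0 : ℝ)))
    (hcont₂ : ContinuousOn (Function.uncurry n₂) (Ici (0 : ℝ) ×ˢ Ici (0 : ℝ)))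
    (hnn₁ : ∀ a t, 0 ≤ a → 0 ≤ t → 0 ≤ n₁ a t)
    (hnn₂ : ∀ a t, 0 ≤ a → 0 ≤ t → 0 ≤ n₂ a t)
    (hint₁ : ∀ t, 0 ≤ t → IntegrableOn (fun a => n₁ a t) (Ioi (0 : ℝ)))
    (hint₂ : ∀ t, 0 ≤ t → IntegrableOn (fun a => n₂ a t) (Ioi (0 : ℝ)))
    (hNcont₁ : ContinuousOn (fun t => ∫ a in Ioi (0 : ℝ), n₁ a t) (Ici (0 : ℝ)))
    (hNcont₂ : ContinuousOn (fun t => ∫ a in Ioi (0 : ℝ), n₂ a t) (Ici (0 : ℝ)))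
    (hderiv₁ : ∀ a t, 0 ≤ a → 0 ≤ t →
      HasDerivAt (fun s => n₁ (a + s) (t + s))
        (-(d a + η * ∫ α in Ioi (0 : ℝ), n₁ α t) * n₁ a t) 0)
    (hderiv₂ : ∀ a t, 0 ≤ a → 0 ≤ t →
      HasDerivAt (fun s => n₂ (a + s) (t + s))
        (-(d a + η * ∫ α in Ioi (0 : ℝ), n₂ α t) * n₂ a t) 0)
    (hbc₁ : ∀ t, 0 ≤ t → n₁ 0 t = ∫ a in Ioi (0 : ℝ), b a * n₁ a t)
    (hbc₂ : ∀ t, 0 ≤ t → n₂ 0 t = ∫ a in Ioi (0 : ℝ), b a * n₂ a t)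
    (hinit : ∀ a, 0 ≤ a → n₁ a 0 = n₂ a 0) :
    ∀ a t, 0 ≤ a → 0 ≤ t → n₁ a t = n₂ a t :=
  logistic_gurtin_mccamy_unique_general b d bbar dlow η hbcont hb0 hbbar hdlow hdlowpos hη n₁ n₂
    hcont₁ hcont₂ hnn₁ hnn₂ hint₁ hint₂ hNcont₁ hNcont₂ hderiv₁ hderiv₂ hbc₁ hbc₂ hinit
end
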